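/- Let G be a simple connected graph with n nodes and m edges, S_q(G) its q-subdivision graph with old node set V and new node set V′. Then ∑_{i∈V′} ∑_{j∈V} r̂_{ij} = K̄(G) + (mnq - n² + n)/2, where K̄(G) = ∑_{{i,j}⊆V} (d_i + d_j) r_{ij} is the additive degree-Kirchhoff index of G and r̂ denotes effective resistance in S_q(G). -/

import Mathlib

open Finset

variable {V : Type*}

/-- Normalized adjacency matrix `P = D^{-1/2} A D^{-1/2}`. -/
noncomputable def normAdj [Fintype V] (G : SimpleGraph V) [DecidableRel G.Adj] :
    Matrix V V ℝ :=
  Matrix.of fun i j =>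
    if G.Adj i j then 1 / Real.sqrt ((G.degree i : ℝ) * (G.degree j : ℝ)) else 0

lemma normAdj_isHermitian [Fintype V] (G : SimpleGraph V) [DecidableRel G.Adj] :
    (normAdj G).IsHermitian := by
  ext i j
  simp only [Matrix.conjTranspose_apply, normAdj, Matrix.of_apply, star_trivial]
  by_cases h : G.Adj i j
  · rw [if_pos h, if_pos ((G.adj_comm i j).mp h), mul_comm]
  · rw [if_neg h, if_neg (fun h' => h ((G.adj_comm j i).mp h'))]

/-- `μ` is an eigenvalue of `M`. -/
def IsEigenvalue {W : Type*} [Fintype W] (M : Matrix W W ℝ) (μ : ℝ) : Prop :=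
  ∃ v : W → ℝ, v ≠ 0 ∧ M.mulVec v = μ • v

/-- Multiplicity of `μ` as an eigenvalue of `M` (dimension of the eigenspace). -/
noncomputable def eigMult {W : Type*} [Fintype W] [DecidableEq W]
    (M : Matrix W W ℝ) (μ : ℝ) : ℕ :=
  Module.finrank ℝ (LinearMap.ker (Matrix.toLin' (M - μ • (1 : Matrix W W ℝ))))

/-- `r` is the effective-resistance function of `G`: `r i j = φ i - φ j` where
`L φ = e_i - e_j`. -/
def IsEffRes [Fintype V] [DecidableEq V] (G : SimpleGraph V) [DecidableRel G.Adj]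
    (r : V → V → ℝ) : Prop :=
  ∀ i j : V, ∃ φ : V → ℝ,
    (G.lapMatrix ℝ).mulVec φ =
      (fun k => (if k = i then (1 : ℝ) else 0) - (if k = j then (1 : ℝ) else 0)) ∧
    r i j = φ i - φ j

/-- `T` is the expected-hitting-time function of the simple random walk on `G`. -/
def IsHitting [Fintype V] (G : SimpleGraph V) [DecidableRel G.Adj] (T : V → V → ℝ) : Prop :=
  (∀ j, T j j = 0) ∧
  ∀ i j : V, i ≠ j → T i j = 1 + (∑ k ∈ G.neighborFinset i, T k j) / (G.degree i : ℝ)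

/-- Kemeny constant `∑_{λ eigenvalue ≠ 1} 1/(1-λ)` of the random walk on `G`. -/
noncomputable def kemeny [Fintype V] [DecidableEq V] (G : SimpleGraph V) [DecidableRel G.Adj]
    (hP : (normAdj G).IsHermitian) : ℝ :=
  ∑ i, if hP.eigenvalues i = 1 then 0 else 1 / (1 - hP.eigenvalues i)

/-- Kirchhoff index. -/
noncomputable def kirchhoff [Fintype V] (r : V → V → ℝ) : ℝ :=
  (∑ i, ∑ j, r i j) / 2

/-- Additive degree-Kirchhoff index. -/
noncomputable def addKirchhoff [Fintype V] (G : SimpleGraph V) [DecidableRel G.Adj]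
    (r : V → V → ℝ) : ℝ :=
  (∑ i, ∑ j, ((G.degree i : ℝ) + (G.degree j : ℝ)) * r i j) / 2

/-- Multiplicative degree-Kirchhoff index. -/
noncomputable def mulKirchhoff [Fintype V] (G : SimpleGraph V) [DecidableRel G.Adj]
    (r : V → V → ℝ) : ℝ :=
  (∑ i, ∑ j, (G.degree i : ℝ) * (G.degree j : ℝ) * r i j) / 2

/-- The adjacency relation of the q-subdivision graph. -/
def qSubAdj (G : SimpleGraph V) (q : ℕ) :
    (V ⊕ (G.edgeSet × Fin q)) → (V ⊕ (G.edgeSet × Fin q)) → Prop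
  | Sum.inl u, Sum.inr p => u ∈ (p.1 : Sym2 V)
  | Sum.inr p, Sum.inl u => u ∈ (p.1 : Sym2 V)
  | _, _ => False

/-- The q-subdivision graph `S_q(G)`: every edge `uv` of `G` is replaced by `q`
disjoint paths of length 2. -/
def qSubdivision (G : SimpleGraph V) (q : ℕ) :
    SimpleGraph (V ⊕ (G.edgeSet × Fin q)) where
  Adj := qSubAdj G q
  symm := by
    constructor
    intro a b h
    cases a <;> cases b <;> simp_all [qSubAdj]
  loopless := by
    constructor
    intro a h
    cases a <;> simp_all [qSubAdj]

noncomputable instance (G : SimpleGraph V) (q : ℕ) :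
    DecidableRel (qSubdivision G q).Adj := Classical.decRel _

noncomputable instance [Fintype V] (G : SimpleGraph V) : Fintype G.edgeSet :=
  Fintype.ofFinite _

/-!
Write `L` for the Laplacian of a connected graph. Grounding the unit-current potentials at a
vertex `o` gives a matrix `M` with `L M = I - e_o 𝟙ᵀ`, symmetric by reciprocity, in terms of which
`r i j = M i i + M j j - 2 M i j`. Two consequences drive the computation: Foster's theorem
`∑_{i ~ j} r i j = n - 1` (the trace of `L M` is `n - 1`), and, for a vertex `p` whose only
neighbours are `x ≠ y`, the row of `L M` at `p` gives
`r p j = 1/2 - r x y / 4 + (r x j + r y j) / 2` for `j ≠ p`.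

In `S_q(G)` every edge of `G` becomes `q` parallel paths of resistance `2`, so between old vertices
`r̂ = (2 / q) r`. A new vertex on the edge `xy` thus has
`∑_{j ∈ V} r̂ = n / 2 - n r x y / (2 q) + (R x + R y) / q` with `R x = ∑_j r x j`; summing over the
`q m` new vertices and using Foster's theorem and `∑_{i ~ j} (R i + R j) = ∑_i d_i R_i = K̄(G)`
gives the formula.
-/

open Matrix

theorem dotProduct_ite_sub_ite {R : Type*} [Ring R] [Fintype V] [DecidableEq V] (φ : V → R)
    (a b : V) :
    φ ⬝ᵥ (fun k => (if k = a then (1 : R) else 0) - (if k = b then 1 else 0)) = φ a - φ b := by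
  simp [dotProduct, mul_sub, Finset.sum_sub_distrib]

namespace SimpleGraph

section Sums

variable [Fintype V] (G : SimpleGraph V) [DecidableRel G.Adj] {M : Type*} [AddCommMonoid M]

theorem sum_darts_eq_sum_sum_neighborFinset (f : V → V → M) :
    ∑ d : G.Dart, f d.fst d.snd = ∑ v, ∑ w ∈ G.neighborFinset v, f v w := by
  let e : (Σ v, G.neighborSet v) ≃ G.Dart :=
    { toFun := fun s => ⟨(s.1, s.2), s.2.2⟩
      invFun := fun d => ⟨d.fst, d.snd, d.adj⟩ }
  rw [← e.sum_comp, Fintype.sum_sigma]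
  exact Finset.sum_congr rfl fun v _ => Finset.sum_set_coe (f := f v) (G.neighborSet v)

theorem sum_darts_fst (f : V → M) : ∑ d : G.Dart, f d.fst = ∑ v, G.degree v • f v := by
  simp [sum_darts_eq_sum_sum_neighborFinset G (fun v _ => f v)]

theorem sum_darts_swap (f : V → V → M) :
    ∑ d : G.Dart, f d.snd d.fst = ∑ d : G.Dart, f d.fst d.snd :=
  Equiv.sum_comp (Dart.symm_involutive.toPerm _) (fun d : G.Dart => f d.fst d.snd)

theorem two_nsmul_sum_edgeSet [DecidableEq V] [Fintype G.edgeSet] (g : G.edgeSet → M) :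
    2 • ∑ e, g e = ∑ d : G.Dart, g ⟨d.edge, d.edge_mem⟩ := by
  rw [← Finset.sum_fiberwise Finset.univ (fun d : G.Dart => (⟨d.edge, d.edge_mem⟩ : G.edgeSet)),
    Finset.smul_sum]
  refine Finset.sum_congr rfl fun e _ => ?_
  rw [Finset.sum_congr rfl fun d hd => congrArg g (Finset.mem_filter.mp hd).2, Finset.sum_const]
  congr 1
  simpa [Subtype.ext_iff] using (G.dart_edge_fiber_card e e.2).symm

theorem incidenceFinset_eq_image [DecidableEq V] (w : V) :
    G.incidenceFinset w = (G.neighborFinset w).image (s(w, ·)) := by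
  ext e
  induction e using Sym2.ind with
  | _ a b =>
    simp only [mem_incidenceFinset, incidenceSet, Set.mem_ofPred_eq, mem_edgeSet, Sym2.mem_iff,
      Finset.mem_image, mem_neighborFinset, Sym2.eq_iff]
    constructor
    · rintro ⟨hab, rfl | rfl⟩
      exacts [⟨b, hab, .inl ⟨rfl, rfl⟩⟩, ⟨a, hab.symm, .inr ⟨rfl, rfl⟩⟩]
    · rintro ⟨v, hv, ⟨rfl, rfl⟩ | ⟨rfl, rfl⟩⟩
      exacts [⟨hv, .inl rfl⟩, ⟨hv.symm, .inr rfl⟩]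

theorem sum_ite_mem_edgeSet [DecidableEq V] [Fintype G.edgeSet] (w : V) (g : Sym2 V → M) :
    ∑ e : G.edgeSet, (if w ∈ (e : Sym2 V) then g e else 0) =
      ∑ v ∈ G.neighborFinset w, g s(w, v) := by
  rw [Finset.sum_set_coe (f := fun e => if w ∈ e then g e else 0), ← edgeFinset,
    ← Finset.sum_filter, ← incidenceFinset_eq_filter, incidenceFinset_eq_image,
    Finset.sum_image fun _ _ _ _ h => Sym2.congr_right.mp h]

end Sums

section Laplacian

variable [Fintype V] [DecidableEq V] {G : SimpleGraph V} [DecidableRel G.Adj]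

theorem lapMatrix_mul_apply {R : Type*} [NonAssocRing R] (M : Matrix V V R) (i j : V) :
    (G.lapMatrix R * M) i j = G.degree i * M i j - ∑ u ∈ G.neighborFinset i, M u j :=
  G.lapMatrix_mulVec_apply i fun k => M k j

theorem lapMatrix_reciprocity {R : Type*} [CommRing R] {φ ψ : V → R} {a b c d : V}
    (hφ : G.lapMatrix R *ᵥ φ = fun k => (if k = a then (1 : R) else 0) - (if k = b then 1 else 0))
    (hψ : G.lapMatrix R *ᵥ ψ = fun k => (if k = c then (1 : R) else 0) - (if k = d then 1 else 0)) :
    ψ a - ψ b = φ c - φ d := by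
  rw [← dotProduct_ite_sub_ite, ← dotProduct_ite_sub_ite, ← hφ, ← hψ, dotProduct_mulVec,
    ← mulVec_transpose, (G.isSymm_lapMatrix R).eq, dotProduct_comm]

/-- Column `i` of `M` is the potential of a unit current from `i` to `o`, grounded at `o`. -/
theorem exists_isSymm_lapMatrix_mul_eq {o : V}
    (hpot : ∀ i, ∃ φ : V → ℝ, G.lapMatrix ℝ *ᵥ φ =
      fun k => (if k = i then (1 : ℝ) else 0) - (if k = o then 1 else 0)) :
    ∃ M : Matrix V V ℝ, M.IsSymm ∧
      G.lapMatrix ℝ * M = 1 - of fun k _ => if k = o then 1 else 0 := by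
  choose φ hφ using hpot
  refine ⟨of fun k i => φ i k - φ i o, ?_, ?_⟩
  · ext i k
    exact lapMatrix_reciprocity (hφ _) (hφ _)
  · ext k i
    have hcol : G.lapMatrix ℝ *ᵥ (fun k => φ i k - φ i o) = G.lapMatrix ℝ *ᵥ φ i := by
      rw [show (fun k => φ i k - φ i o) = φ i - fun _ => φ i o from rfl, mulVec_sub,
        (G.lapMatrix_mulVec_eq_zero_iff_forall_adj (x := fun _ => φ i o)).mpr fun _ _ _ => rfl,
        sub_zero]
    have := congrFun hcol k
    rw [hφ i] at this
    simp only [mulVec, dotProduct] at this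
    simp [Matrix.mul_apply, this, Matrix.one_apply, eq_comm]

end Laplacian

end SimpleGraph

namespace IsEffRes

open SimpleGraph

variable [Fintype V] [DecidableEq V] {G : SimpleGraph V} [DecidableRel G.Adj] {r : V → V → ℝ}

theorem eq_sub_of_lapMatrix_mulVec_eq (hr : IsEffRes G r) (hc : G.Connected) {i j : V}
    {ψ : V → ℝ} (hψ : G.lapMatrix ℝ *ᵥ ψ =
      fun k => (if k = i then (1 : ℝ) else 0) - (if k = j then 1 else 0)) :
    r i j = ψ i - ψ j := by
  obtain ⟨φ, hφ, hrij⟩ := hr i j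
  have hconst := G.lapMatrix_mulVec_eq_zero_iff_forall_reachable.mp
    (by rw [mulVec_sub, hφ, hψ, sub_self] : G.lapMatrix ℝ *ᵥ (φ - ψ) = 0) i j (hc.preconnected i j)
  simp only [Pi.sub_apply] at hconst
  linarith

theorem eq_of_lapMatrix_mul_eq (hr : IsEffRes G r) (hc : G.Connected) {o : V}
    {M : Matrix V V ℝ} (hMs : M.IsSymm)
    (hM : G.lapMatrix ℝ * M = 1 - of fun k _ => if k = o then 1 else 0) (i j : V) :
    r i j = M i i + M j j - 2 * M i j := by
  rw [hr.eq_sub_of_lapMatrix_mulVec_eq hc (ψ := fun k => M k i - M k j)]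
  · rw [hMs.apply j i]; ring
  · ext k
    have hki := congrFun (congrFun hM k) i
    have hkj := congrFun (congrFun hM k) j
    simp only [Matrix.mul_apply, Matrix.sub_apply, one_apply, of_apply] at hki hkj
    simp only [mulVec, dotProduct, mul_sub, Finset.sum_sub_distrib, hki, hkj]
    ring

theorem exists_isSymm_lapMatrix_mul_eq (hr : IsEffRes G r) (hc : G.Connected) (o : V) :
    ∃ M : Matrix V V ℝ, M.IsSymm ∧
      G.lapMatrix ℝ * M = (1 - of fun k _ => if k = o then 1 else 0) ∧
      ∀ i j, r i j = M i i + M j j - 2 * M i j := by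
  obtain ⟨M, hMs, hM⟩ :=
    SimpleGraph.exists_isSymm_lapMatrix_mul_eq fun i => (hr i o).imp fun _ h => h.1
  exact ⟨M, hMs, hM, hr.eq_of_lapMatrix_mul_eq hc hMs hM⟩

theorem symm (hr : IsEffRes G r) (hc : G.Connected) (i j : V) : r i j = r j i := by
  obtain ⟨M, hMs, -, hrM⟩ := hr.exists_isSymm_lapMatrix_mul_eq hc i
  rw [hrM, hrM, hMs.apply i j]
  ring

/-- Foster's theorem, with every edge counted once in each direction. -/
theorem sum_darts (hr : IsEffRes G r) (hc : G.Connected) :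
    ∑ d : G.Dart, r d.fst d.snd = 2 * (Fintype.card V - 1) := by
  obtain ⟨o⟩ := hc.nonempty
  obtain ⟨M, hMs, hM, hrM⟩ := hr.exists_isSymm_lapMatrix_mul_eq hc o
  have htrace : ∑ i, (G.lapMatrix ℝ * M) i i = Fintype.card V - 1 := by
    simp [hM, Finset.sum_sub_distrib]
  have hdiag : ∑ d : G.Dart, M d.fst d.fst = ∑ i, G.degree i * M i i := by
    simpa using sum_darts_fst G fun i => M i i
  have hdiag' : ∑ d : G.Dart, M d.snd d.snd = ∑ d : G.Dart, M d.fst d.fst :=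
    sum_darts_swap G fun i _ => M i i
  calc ∑ d : G.Dart, r d.fst d.snd
      = ∑ d : G.Dart, (M d.fst d.fst + M d.snd d.snd - 2 * M d.snd d.fst) :=
        Finset.sum_congr rfl fun d _ => by rw [hrM, hMs.apply d.snd d.fst]
    _ = 2 * ∑ i, (G.lapMatrix ℝ * M) i i := by
        simp only [Finset.sum_sub_distrib, Finset.sum_add_distrib, ← Finset.mul_sum, hdiag',
          hdiag, sum_darts_eq_sum_sum_neighborFinset G fun i j => M j i, lapMatrix_mul_apply]
        ring
    _ = 2 * (Fintype.card V - 1) := by rw [htrace]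

theorem eq_of_neighborFinset_eq_pair (hr : IsEffRes G r) (hc : G.Connected) {p x y j : V}
    (hp : G.neighborFinset p = {x, y}) (hxy : x ≠ y) (hj : j ≠ p) :
    r p j = 1 / 2 - r x y / 4 + (r x j + r y j) / 2 := by
  obtain ⟨M, hMs, hM, hrM⟩ := hr.exists_isSymm_lapMatrix_mul_eq hc j
  have hdeg : (G.degree p : ℝ) = 2 := by
    rw [← card_neighborFinset_eq_degree, hp, Finset.card_pair hxy]; norm_num
  have hrow (c : V) : 2 * M p c - M x c - M y c = if p = c then 1 else 0 := by
    have h := congrFun (congrFun hM p) c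
    rw [lapMatrix_mul_apply, hdeg, hp, Finset.sum_pair hxy] at h
    simp [Matrix.one_apply, hj.symm] at h
    linarith
  have hx : G.Adj p x := (G.mem_neighborFinset p x).mp (by simp [hp])
  have hy : G.Adj p y := (G.mem_neighborFinset p y).mp (by simp [hp])
  have hpp : 2 * M p p - M x p - M y p = 1 := by simpa using hrow p
  have hpj : 2 * M p j - M x j - M y j = 0 := by simpa [hj.symm] using hrow j
  have hpx : 2 * M p x - M x x - M y x = 0 := by simpa [hx.ne] using hrow x
  have hpy : 2 * M p y - M x y - M y y = 0 := by simpa [hy.ne] using hrow y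
  rw [hrM, hrM, hrM, hrM]
  linarith [hMs.apply p x, hMs.apply p y, hMs.apply x y]

end IsEffRes

theorem addKirchhoff_eq_sum_degree_mul [Fintype V] (G : SimpleGraph V) [DecidableRel G.Adj]
    {r : V → V → ℝ} (hr : ∀ i j, r i j = r j i) :
    addKirchhoff G r = ∑ i, (G.degree i : ℝ) * ∑ j, r i j := by
  rw [addKirchhoff]
  simp only [add_mul, Finset.sum_add_distrib, Finset.mul_sum]
  rw [Finset.sum_comm (f := fun i j => (G.degree j : ℝ) * r i j)]
  simp only [hr]
  ring

section Subdivision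

open SimpleGraph

variable {G : SimpleGraph V} {q : ℕ}

@[simp]
theorem qSubdivision_adj_inl_inr {u : V} {p : G.edgeSet × Fin q} :
    (qSubdivision G q).Adj (.inl u) (.inr p) ↔ u ∈ (p.1 : Sym2 V) := Iff.rfl

@[simp]
theorem qSubdivision_adj_inr_inl {u : V} {p : G.edgeSet × Fin q} :
    (qSubdivision G q).Adj (.inr p) (.inl u) ↔ u ∈ (p.1 : Sym2 V) := Iff.rfl

@[simp]
theorem qSubdivision_not_adj_inl_inl {u v : V} : ¬(qSubdivision G q).Adj (.inl u) (.inl v) :=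
  id

@[simp]
theorem qSubdivision_not_adj_inr_inr {p p' : G.edgeSet × Fin q} :
    ¬(qSubdivision G q).Adj (.inr p) (.inr p') :=
  id

theorem qSubdivision_connected (hc : G.Connected) (hq : 0 < q) : (qSubdivision G q).Connected := by
  have hinl {u v : V} (huv : G.Reachable u v) : (qSubdivision G q).Reachable (.inl u) (.inl v) := by
    obtain ⟨w⟩ := huv
    induction w with
    | nil => rfl
    | @cons a b _ hab _ ih =>
      let p : G.edgeSet × Fin q := (⟨s(a, b), hab⟩, ⟨0, hq⟩)
      have hap : (qSubdivision G q).Adj (.inl a) (.inr p) := Sym2.mem_mk_left a b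
      have hpb : (qSubdivision G q).Adj (.inr p) (.inl b) := Sym2.mem_mk_right a b
      exact hap.reachable.trans (hpb.reachable.trans ih)
  obtain ⟨o⟩ := hc.nonempty
  refine (connected_iff_exists_forall_reachable _).mpr ⟨.inl o, ?_⟩
  rintro (u | ⟨e, k⟩)
  · exact hinl (hc.preconnected o u)
  · obtain ⟨x, y, he⟩ : ∃ x y, (e : Sym2 V) = s(x, y) :=
      (e : Sym2 V).inductionOn fun x y => ⟨x, y, rfl⟩
    have hxp : (qSubdivision G q).Adj (.inl x) (.inr (e, k)) := by simp [he]
    exact (hinl (hc.preconnected o x)).trans hxp.reachable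

variable [Fintype V] [DecidableEq V]

theorem qSubdivision_neighborFinset_inr {e : G.edgeSet} {x y : V} (he : (e : Sym2 V) = s(x, y))
    (k : Fin q) :
    (qSubdivision G q).neighborFinset (.inr (e, k)) = {.inl x, .inl y} := by
  ext (u | p) <;> simp [he]

theorem qSubdivision_sum_neighborFinset_inl [DecidableRel G.Adj] {M : Type*} [AddCommMonoid M]
    (w : V) (f : V → M) (g : Sym2 V → M) :
    ∑ u ∈ (qSubdivision G q).neighborFinset (.inl w), Sum.elim f (fun p => g p.1) u =
      q • ∑ v ∈ G.neighborFinset w, g s(w, v) := by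
  rw [neighborFinset_eq_filter, Finset.sum_filter, Fintype.sum_sum_type,
    Fintype.sum_prod_type_right]
  simp [sum_ite_mem_edgeSet]

theorem qSubdivision_degree_inl [DecidableRel G.Adj] (w : V) :
    (qSubdivision G q).degree (.inl w) = q * G.degree w := by
  have h := qSubdivision_sum_neighborFinset_inl (G := G) (q := q) w (fun _ => 1) (fun _ => 1)
  simp only [Sum.elim_lam_const_lam_const, ← Finset.card_eq_sum_ones,
    card_neighborFinset_eq_degree] at h
  exact h

end Subdivision

namespace IsEffRes

open SimpleGraph

variable [Fintype V] [DecidableEq V] {G : SimpleGraph V} [DecidableRel G.Adj] {q : ℕ}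
  {r : V → V → ℝ} {r' : V ⊕ (G.edgeSet × Fin q) → V ⊕ (G.edgeSet × Fin q) → ℝ}

theorem qSubdivision_inl_inl (hr : IsEffRes G r) (hr' : IsEffRes (qSubdivision G q) r')
    (hc : G.Connected) (hq : 0 < q) (a b : V) :
    r' (.inl a) (.inl b) = 2 / q * r a b := by
  have hq' : (q : ℝ) ≠ 0 := by positivity
  obtain ⟨φ, hφ, hrab⟩ := hr a b
  let g : Sym2 V → ℝ := Sym2.lift ⟨fun x y => φ x + φ y, fun _ _ => add_comm _ _⟩
  let ψ : V ⊕ (G.edgeSet × Fin q) → ℝ := Sum.elim (fun w => 2 / q * φ w) (fun p => g p.1 / q)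
  have hψ : (qSubdivision G q).lapMatrix ℝ *ᵥ ψ = fun u =>
      (if u = .inl a then (1 : ℝ) else 0) - (if u = .inl b then 1 else 0) := by
    ext (w | ⟨e, k⟩)
    · have hw := congrFun hφ w
      rw [lapMatrix_mulVec_apply] at hw ⊢
      simp only [ψ]
      rw [qSubdivision_degree_inl, qSubdivision_sum_neighborFinset_inl w _ fun e => g e / q]
      simp only [g, Sum.elim_inl, Nat.cast_mul, Sym2.lift_mk, nsmul_eq_mul, ← Finset.sum_div,
        Finset.sum_add_distrib, Finset.sum_const, card_neighborFinset_eq_degree,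
        Sum.inl.injEq] at hw ⊢
      rw [← hw]
      field_simp
      ring
    · obtain ⟨x, y, he⟩ : ∃ x y, (e : Sym2 V) = s(x, y) :=
        (e : Sym2 V).inductionOn fun x y => ⟨x, y, rfl⟩
      have hxy : x ≠ y := G.ne_of_adj (G.mem_edgeSet.mp (he ▸ e.2))
      rw [lapMatrix_mulVec_apply, ← card_neighborFinset_eq_degree,
        qSubdivision_neighborFinset_inr he, Finset.sum_pair (by simpa using hxy),
        Finset.card_pair (by simpa using hxy)]
      simp [ψ, g, he]
      field_simp
      ring
  rw [hr'.eq_sub_of_lapMatrix_mulVec_eq (qSubdivision_connected hc hq) hψ, hrab]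
  simp only [ψ, Sum.elim_inl]
  ring

theorem qSubdivision_inr_inl (hr : IsEffRes G r) (hr' : IsEffRes (qSubdivision G q) r')
    (hc : G.Connected) (hq : 0 < q) {e : G.edgeSet} {x y : V} (he : (e : Sym2 V) = s(x, y))
    (k : Fin q) (j : V) :
    r' (.inr (e, k)) (.inl j) = 1 / 2 - r x y / (2 * q) + (r x j + r y j) / q := by
  have hxy : x ≠ y := G.ne_of_adj (G.mem_edgeSet.mp (he ▸ e.2))
  rw [hr'.eq_of_neighborFinset_eq_pair (qSubdivision_connected hc hq)
    (qSubdivision_neighborFinset_inr he k) (by simpa using hxy) Sum.inl_ne_inr,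
    hr.qSubdivision_inl_inl hr' hc hq, hr.qSubdivision_inl_inl hr' hc hq,
    hr.qSubdivision_inl_inl hr' hc hq]
  ring

theorem qSubdivision_sum_inr_inl (hr : IsEffRes G r) (hr' : IsEffRes (qSubdivision G q) r')
    (hc : G.Connected) (hq : 0 < q) {e : G.edgeSet} {x y : V} (he : (e : Sym2 V) = s(x, y)) :
    ∑ k : Fin q, ∑ j, r' (.inr (e, k)) (.inl j) =
      q * Fintype.card V / 2 - Fintype.card V * r x y / 2 + ((∑ j, r x j) + ∑ j, r y j) := by
  have hq' : (q : ℝ) ≠ 0 := by positivity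
  simp only [hr.qSubdivision_inr_inl hr' hc hq he, Finset.sum_add_distrib, Finset.sum_sub_distrib,
    ← Finset.sum_div, Finset.sum_const, Finset.card_univ, Fintype.card_fin, nsmul_eq_mul]
  field_simp

end IsEffRes

/-- sum of resistances between new and old nodes of `S_q(G)`. -/
theorem stmt14 [Fintype V] [DecidableEq V] (G : SimpleGraph V) [DecidableRel G.Adj]
    (hconn : G.Connected) (q : ℕ) (hq : 0 < q)
    (r : V → V → ℝ) (r' : (V ⊕ (G.edgeSet × Fin q)) → (V ⊕ (G.edgeSet × Fin q)) → ℝ)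
    (hr : IsEffRes G r) (hr' : IsEffRes (qSubdivision G q) r') :
    ∑ p : G.edgeSet × Fin q, ∑ j : V, r' (Sum.inr p) (Sum.inl j) =
      addKirchhoff G r +
        ((G.edgeFinset.card : ℝ) * (Fintype.card V : ℝ) * q -
          (Fintype.card V : ℝ) ^ 2 + (Fintype.card V : ℝ)) / 2 := by
  set n : ℝ := (Fintype.card V : ℝ)
  have htwice : 2 * ∑ p : G.edgeSet × Fin q, ∑ j : V, r' (Sum.inr p) (Sum.inl j) =
      ∑ d : G.Dart, (q * n / 2 - n * r d.fst d.snd / 2 + ((∑ j, r d.fst j) + ∑ j, r d.snd j)) := by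
    rw [Fintype.sum_prod_type, two_mul, ← two_nsmul, G.two_nsmul_sum_edgeSet]
    exact Finset.sum_congr rfl fun d _ => hr.qSubdivision_sum_inr_inl hr' hconn hq rfl
  have hdarts : (Fintype.card G.Dart : ℝ) = 2 * G.edgeFinset.card := by
    rw [G.dart_card_eq_twice_card_edges, Nat.cast_mul, Nat.cast_ofNat]
    congr!
  have hR : ∑ d : G.Dart, ∑ j, r d.fst j = ∑ i, (G.degree i : ℝ) * ∑ j, r i j := by
    simpa using G.sum_darts_fst fun i => ∑ j, r i j
  simp only [Finset.sum_add_distrib, Finset.sum_sub_distrib, ← Finset.sum_div, ← Finset.mul_sum,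
    Finset.sum_const, Finset.card_univ, nsmul_eq_mul, hr.sum_darts hconn, hdarts, hR,
    G.sum_darts_swap fun i _ => ∑ j, r i j] at htwice
  rw [addKirchhoff_eq_sum_degree_mul G (hr.symm hconn)]
  linear_combination htwice / 2
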